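/- arXiv:2110.09611 — 3 statements merged into one kernel-verified Lean document; each statement's English description precedes it below -/
import Mathlib

section
/- The double cross product X(u,v) = uv + ⟨u,v⟩e_0 on the imaginary octonions satisfies the axioms of a 2-fold cross product: ⟨X(u,v), u⟩ = 0, ⟨X(u,v), v⟩ = 0, and ‖X(u,v)‖² = ‖u‖²‖v‖² - ⟨u,v⟩² for all u, v ∈ Im 𝕆. -/
open scoped RealInnerProductSpace

noncomputable section

abbrev Oct : Type := EuclideanSpace ℝ (Fin 8)

def octe (i : Fin 8) : Oct := EuclideanSpace.single i 1

def plusTriples : List (Fin 8 × Fin 8 × Fin 8) :=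
  [(1,2,3),(1,4,5),(1,7,6),(2,4,6),(2,5,7),(3,4,7),(3,6,5)]

/-- Completely skew-symmetric structure tensor taking the value `+1` on the
triples 123, 145, 176, 246, 257, 347, 365. -/
def eps (i j k : Fin 8) : ℝ :=
  if plusTriples.any (fun t => decide ((i,j,k) = t ∨ (i,j,k) = (t.2.1, t.2.2, t.1) ∨
      (i,j,k) = (t.2.2, t.1, t.2.1))) then 1
  else if plusTriples.any (fun t => decide ((i,j,k) = (t.1, t.2.2, t.2.1) ∨
      (i,j,k) = (t.2.2, t.2.1, t.1) ∨ (i,j,k) = (t.2.1, t.1, t.2.2))) then -1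
  else 0

/-- Structure constants of octonion multiplication:
`e_0 e_i = e_i e_0 = e_i` and `e_i e_j = -δ_ij e_0 + ε_ijk e_k` for `i,j ≥ 1`. -/
def structC (i j k : Fin 8) : ℝ :=
  if i = 0 then (if j = k then 1 else 0)
  else if j = 0 then (if i = k then 1 else 0)
  else (if i = j ∧ k = 0 then (-1:ℝ) else 0) + eps i j k

/-- Octonion multiplication on ℝ⁸. -/
def octMul (x y : Oct) : Oct := WithLp.toLp 2 (fun k => ∑ i, ∑ j, x i * y j * structC i j k)

/-- Octonionic conjugation. -/
def octConj (x : Oct) : Oct := WithLp.toLp 2 (fun k => if k = 0 then x 0 else -(x k))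

/-- The triple cross product `X(u,v,w) = -u(v̄w) + ⟨u,v⟩w + ⟨v,w⟩u - ⟨w,u⟩v`. -/
def X3 (u v w : Oct) : Oct :=
  -octMul u (octMul (octConj v) w) + ⟪u, v⟫ • w + ⟪v, w⟫ • u - ⟪w, u⟫ • v

/-- The double cross product `u × v = uv + ⟨u,v⟩ e_0` (on imaginary octonions). -/
def cross2 (u v : Oct) : Oct := octMul u v + ⟪u, v⟫ • octe 0

/-! For imaginary `u, v` the real part of `u v` is `-⟪u, v⟫`, so `X(u, v)` is the imaginary part
`∑ ε_ijk u_i v_j e_k` of `u v`, the seven-dimensional cross product. Written out in coordinates,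
orthogonality to `u` and `v` and the Lagrange identity for its norm are polynomial identities in
the fourteen coordinates of `u` and `v`. -/

lemma Oct.inner_eq_sum (x y : Oct) : ⟪x, y⟫ = ∑ i, x i * y i := by
  simp [PiLp.inner_apply, mul_comm]

lemma cross2_apply_of_im {u v : Oct} (hu0 : u 0 = 0) (hv0 : v 0 = 0) (k : Fin 8) :
    cross2 u v k = ∑ i, ∑ j, u i * v j * eps i j k := by
  have hterm : ∀ i j, u i * v j * structC i j k =
      (if i = j ∧ k = 0 then -(u i * v j) else 0) + u i * v j * eps i j k := by
    intro i j
    rcases eq_or_ne i 0 with rfl | hi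
    · simp [hu0]
    rcases eq_or_ne j 0 with rfl | hj
    · simp [hv0]
    simp only [structC, hi, hj, if_false]
    split_ifs <;> ring
  have hreal : ∑ i, ∑ j, (if i = j ∧ k = 0 then -(u i * v j) else 0) = -(⟪u, v⟫ * octe 0 k) := by
    rcases eq_or_ne k 0 with rfl | hk
    · simp [octe, Oct.inner_eq_sum]
    · simp [octe, hk]
  simp only [cross2, octMul, PiLp.add_apply, PiLp.smul_apply, smul_eq_mul, hterm,
    Finset.sum_add_distrib, hreal]
  ring

lemma cross2_eq_of_im {u v : Oct} (hu0 : u 0 = 0) (hv0 : v 0 = 0) :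
    cross2 u v = !₂[0,
      u 2 * v 3 - u 3 * v 2 + u 4 * v 5 - u 5 * v 4 - u 6 * v 7 + u 7 * v 6,
      -u 1 * v 3 + u 3 * v 1 + u 4 * v 6 + u 5 * v 7 - u 6 * v 4 - u 7 * v 5,
      u 1 * v 2 - u 2 * v 1 + u 4 * v 7 - u 5 * v 6 + u 6 * v 5 - u 7 * v 4,
      -u 1 * v 5 - u 2 * v 6 - u 3 * v 7 + u 5 * v 1 + u 6 * v 2 + u 7 * v 3,
      u 1 * v 4 - u 2 * v 7 + u 3 * v 6 - u 4 * v 1 - u 6 * v 3 + u 7 * v 2,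
      u 1 * v 7 + u 2 * v 4 - u 3 * v 5 - u 4 * v 2 + u 5 * v 3 - u 7 * v 1,
      -u 1 * v 6 + u 2 * v 5 + u 3 * v 4 - u 4 * v 3 - u 5 * v 2 + u 6 * v 1] := by
  ext k
  rw [cross2_apply_of_im hu0 hv0]
  fin_cases k <;> simp +decide [Fin.sum_univ_eight, eps, plusTriples] <;> ring

/-- The double cross product on the imaginary octonions satisfies the
axioms of a 2-fold cross product. -/
theorem stmt4 (u v : Oct) (hu0 : u 0 = 0) (hv0 : v 0 = 0) :
    ⟪cross2 u v, u⟫ = 0 ∧ ⟪cross2 u v, v⟫ = 0 ∧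
    ‖cross2 u v‖ ^ 2 = ‖u‖ ^ 2 * ‖v‖ ^ 2 - ⟪u, v⟫ ^ 2 := by
  simp only [← real_inner_self_eq_norm_sq, cross2_eq_of_im hu0 hv0, Oct.inner_eq_sum,
    Fin.sum_univ_eight, hu0, hv0, Matrix.cons_val_zero, Matrix.cons_val_one, Matrix.cons_val]
  refine ⟨by ring, by ring, by ring⟩
end
end

section
/- The triple cross product X(u,v,w) = -u(v̄w) + ⟨u,v⟩w + ⟨v,w⟩u - ⟨w,u⟩v on 𝕆 satisfies the axioms of a 3-fold cross product: ⟨X(u,v,w), u⟩ = ⟨X(u,v,w), v⟩ = ⟨X(u,v,w), w⟩ = 0, and ‖X(u,v,w)‖² = det(⟨u_i, u_j⟩) where (u_1,u_2,u_3)=(u,v,w), for all u,v,w ∈ 𝕆. -/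
/-! The octonions form a composition algebra: polarizing `‖x y‖ = ‖x‖ ‖y‖` twice gives
`⟪x y, z t⟫ + ⟪x t, z y⟫ = 2 ⟪x, z⟫ ⟪y, t⟫`. Together with `⟪x y, z⟫ = ⟪y, x̄ z⟫` and
`x̄ x = ‖x‖² 1` (all checked in coordinates) this computes the inner products of `u (v̄ w)`
with `u`, `v`, `w` and with itself. Since `X(u,v,w)` is
`-u (v̄ w)` plus a combination of `u, v, w`, orthogonality gives
`‖X(u,v,w)‖² = -⟪X(u,v,w), u (v̄ w)⟫`, and this expands to the Gram determinant. -/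

open scoped RealInnerProductSpace

noncomputable section

local infixl:70 " ⊙ " => octMul

theorem Oct.inner_eq (x y : Oct) : ⟪x, y⟫ = x 0 * y 0 + x 1 * y 1 + x 2 * y 2 + x 3 * y 3
    + x 4 * y 4 + x 5 * y 5 + x 6 * y 6 + x 7 * y 7 := by
  simp [PiLp.inner_apply, Fin.sum_univ_eight]
  ring

section Coordinates

variable (x y : Oct)

theorem octMul_apply_zero :
    (x ⊙ y) 0 = x 0 * y 0 - x 1 * y 1 - x 2 * y 2 - x 3 * y 3
      - x 4 * y 4 - x 5 * y 5 - x 6 * y 6 - x 7 * y 7 := by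
  simp +decide [octMul, Fin.sum_univ_eight, structC, eps, plusTriples]
  ring

theorem octMul_apply_one :
    (x ⊙ y) 1 = x 0 * y 1 + x 1 * y 0 + x 2 * y 3 - x 3 * y 2
      + x 4 * y 5 - x 5 * y 4 - x 6 * y 7 + x 7 * y 6 := by
  simp +decide [octMul, Fin.sum_univ_eight, structC, eps, plusTriples]
  ring

theorem octMul_apply_two :
    (x ⊙ y) 2 = x 0 * y 2 - x 1 * y 3 + x 2 * y 0 + x 3 * y 1
      + x 4 * y 6 + x 5 * y 7 - x 6 * y 4 - x 7 * y 5 := by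
  simp +decide [octMul, Fin.sum_univ_eight, structC, eps, plusTriples]
  ring

theorem octMul_apply_three :
    (x ⊙ y) 3 = x 0 * y 3 + x 1 * y 2 - x 2 * y 1 + x 3 * y 0
      + x 4 * y 7 - x 5 * y 6 + x 6 * y 5 - x 7 * y 4 := by
  simp +decide [octMul, Fin.sum_univ_eight, structC, eps, plusTriples]
  ring

theorem octMul_apply_four :
    (x ⊙ y) 4 = x 0 * y 4 - x 1 * y 5 - x 2 * y 6 - x 3 * y 7
      + x 4 * y 0 + x 5 * y 1 + x 6 * y 2 + x 7 * y 3 := by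
  simp +decide [octMul, Fin.sum_univ_eight, structC, eps, plusTriples]
  ring

theorem octMul_apply_five :
    (x ⊙ y) 5 = x 0 * y 5 + x 1 * y 4 - x 2 * y 7 + x 3 * y 6
      - x 4 * y 1 + x 5 * y 0 - x 6 * y 3 + x 7 * y 2 := by
  simp +decide [octMul, Fin.sum_univ_eight, structC, eps, plusTriples]
  ring

theorem octMul_apply_six :
    (x ⊙ y) 6 = x 0 * y 6 + x 1 * y 7 + x 2 * y 4 - x 3 * y 5
      - x 4 * y 2 + x 5 * y 3 + x 6 * y 0 - x 7 * y 1 := by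
  simp +decide [octMul, Fin.sum_univ_eight, structC, eps, plusTriples]
  ring

theorem octMul_apply_seven :
    (x ⊙ y) 7 = x 0 * y 7 - x 1 * y 6 + x 2 * y 5 + x 3 * y 4
      - x 4 * y 3 - x 5 * y 2 + x 6 * y 1 + x 7 * y 0 := by
  simp +decide [octMul, Fin.sum_univ_eight, structC, eps, plusTriples]
  ring

theorem octConj_apply_zero : octConj x 0 = x 0 := rfl

theorem octConj_apply_of_ne_zero {k : Fin 8} (hk : k ≠ 0) : octConj x k = -x k := by
  simp [octConj, hk]

end Coordinates

section CompositionAlgebra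

attribute [local simp] Oct.inner_eq octMul_apply_zero octMul_apply_one octMul_apply_two
  octMul_apply_three octMul_apply_four octMul_apply_five octMul_apply_six octMul_apply_seven
  octConj_apply_zero octConj_apply_of_ne_zero

variable (x y z t : Oct)

theorem inner_octMul_octMul_add_swap :
    ⟪x ⊙ y, z ⊙ t⟫ + ⟪x ⊙ t, z ⊙ y⟫ = 2 * ⟪x, z⟫ * ⟪y, t⟫ := by
  simp
  ring

theorem inner_octMul_left : ⟪x ⊙ y, z⟫ = ⟪y, octConj x ⊙ z⟫ := by
  simp
  ring

theorem inner_octConj_octConj : ⟪octConj x, octConj y⟫ = ⟪x, y⟫ := by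
  simp

theorem octConj_mul_self : octConj x ⊙ x = ⟪x, x⟫ • octe 0 := by
  rw [Oct.inner_eq]
  ext k
  fin_cases k <;> simp [octe] <;> ring

theorem inner_octe_zero_octConj_mul : ⟪octe 0, octConj x ⊙ y⟫ = ⟪x, y⟫ := by
  simp [octe]

theorem inner_octMul_octMul_same_left : ⟪x ⊙ y, x ⊙ z⟫ = ⟪x, x⟫ * ⟪y, z⟫ := by
  linarith [inner_octMul_octMul_add_swap x y x z, real_inner_comm (x ⊙ y) (x ⊙ z)]

theorem inner_octMul_octMul_same_right : ⟪x ⊙ z, y ⊙ z⟫ = ⟪x, y⟫ * ⟪z, z⟫ := by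
  linarith [inner_octMul_octMul_add_swap x z y z]

end CompositionAlgebra

section TripleProduct

variable (u v w : Oct)

theorem inner_octMul_conj_mul_left : ⟪u ⊙ (octConj v ⊙ w), u⟫ = ⟪u, u⟫ * ⟪v, w⟫ := by
  rw [inner_octMul_left, real_inner_comm, octConj_mul_self, real_inner_smul_left,
    inner_octe_zero_octConj_mul]

theorem inner_octMul_conj_mul_middle :
    ⟪u ⊙ (octConj v ⊙ w), v⟫ = 2 * ⟪u, v⟫ * ⟪v, w⟫ - ⟪v, v⟫ * ⟪u, w⟫ := by
  have key := inner_octMul_octMul_add_swap (octConj v) w (octConj u) v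
  rw [octConj_mul_self, real_inner_smul_left, inner_octe_zero_octConj_mul, inner_octConj_octConj,
    real_inner_comm u v, real_inner_comm v w] at key
  rw [inner_octMul_left]
  linarith

theorem inner_octMul_conj_mul_right : ⟪u ⊙ (octConj v ⊙ w), w⟫ = ⟪w, w⟫ * ⟪u, v⟫ := by
  rw [inner_octMul_left, inner_octMul_octMul_same_right, inner_octConj_octConj,
    real_inner_comm v u, mul_comm]

theorem inner_octMul_conj_mul_self :
    ⟪u ⊙ (octConj v ⊙ w), u ⊙ (octConj v ⊙ w)⟫ = ⟪u, u⟫ * ⟪v, v⟫ * ⟪w, w⟫ := by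
  rw [inner_octMul_octMul_same_left, inner_octMul_octMul_same_left, inner_octConj_octConj,
    mul_assoc]

theorem inner_X3_left : ⟪X3 u v w, u⟫ = 0 := by
  simp only [X3, inner_add_left, inner_sub_left, inner_neg_left, real_inner_smul_left,
    inner_octMul_conj_mul_left, real_inner_comm u v, real_inner_comm u w]
  ring

theorem inner_X3_middle : ⟪X3 u v w, v⟫ = 0 := by
  simp only [X3, inner_add_left, inner_sub_left, inner_neg_left, real_inner_smul_left,
    inner_octMul_conj_mul_middle, real_inner_comm u w, real_inner_comm v w]
  ring

theorem inner_X3_right : ⟪X3 u v w, w⟫ = 0 := by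
  simp only [X3, inner_add_left, inner_sub_left, inner_neg_left, real_inner_smul_left,
    inner_octMul_conj_mul_right, real_inner_comm u w]
  ring

theorem norm_X3_sq : ‖X3 u v w‖ ^ 2 =
    Matrix.det !![⟪u, u⟫, ⟪u, v⟫, ⟪u, w⟫;
                  ⟪v, u⟫, ⟪v, v⟫, ⟪v, w⟫;
                  ⟪w, u⟫, ⟪w, v⟫, ⟪w, w⟫] := by
  have orthogonal : ‖X3 u v w‖ ^ 2 = -⟪X3 u v w, u ⊙ (octConj v ⊙ w)⟫ := by
    rw [← real_inner_self_eq_norm_sq]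
    conv_lhs => arg 3; rw [X3]
    simp only [inner_add_right, inner_sub_right, inner_neg_right, real_inner_smul_right,
      inner_X3_left, inner_X3_middle, inner_X3_right]
    ring
  rw [orthogonal, real_inner_comm, X3, Matrix.det_fin_three]
  simp only [inner_add_right, inner_sub_right, inner_neg_right, real_inner_smul_right,
    inner_octMul_conj_mul_self, inner_octMul_conj_mul_left, inner_octMul_conj_mul_middle,
    inner_octMul_conj_mul_right, Matrix.of_apply, Matrix.cons_val', Matrix.cons_val_zero,
    Matrix.cons_val_one, Matrix.cons_val_two, Matrix.head_cons, Matrix.tail_cons,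
    Matrix.empty_val', Matrix.cons_val_fin_one, Matrix.head_fin_const, real_inner_comm u v,
    real_inner_comm u w, real_inner_comm v w]
  ring

end TripleProduct

/-- The triple cross product on 𝕆 satisfies the axioms of a 3-fold cross
product: orthogonality to each argument and norm given by the Gram
determinant. -/
theorem stmt5 (u v w : Oct) :
    ⟪X3 u v w, u⟫ = 0 ∧ ⟪X3 u v w, v⟫ = 0 ∧ ⟪X3 u v w, w⟫ = 0 ∧
    ‖X3 u v w‖ ^ 2 =
      Matrix.det !![⟪u, u⟫, ⟪u, v⟫, ⟪u, w⟫;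
                    ⟪v, u⟫, ⟪v, v⟫, ⟪v, w⟫;
                    ⟪w, u⟫, ⟪w, v⟫, ⟪w, w⟫] :=
  ⟨inner_X3_left u v w, inner_X3_middle u v w, inner_X3_right u v w, norm_X3_sq u v w⟩
end
end

section
/- Let σ₃ be the unit normal section of G(3,8) given by the octonionic triple cross product, and let γ_j^ℓ(s) be the geodesic of G(3,8) through e_0∧e_1∧e_2 rotating e_ℓ toward e_j (ℓ ∈ {0,1,2}, j ∈ {3,...,7}, indices mod 3). Then the covariant derivative of σ₃ at t=0 along γ_j^ℓ equals X(e_j, e_{ℓ+1}, e_{ℓ+2}) + δ_{j3} e_ℓ; in particular it vanishes when j = 3. -/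
open scoped RealInnerProductSpace

noncomputable section

/-- The inclusion `Fin 3 → Fin 8`. -/
def l0 (l : Fin 3) : Fin 8 := Fin.castLE (by norm_num) l
def l1 (l : Fin 3) : Fin 8 := Fin.castLE (by norm_num) (l + 1)
def l2 (l : Fin 3) : Fin 8 := Fin.castLE (by norm_num) (l + 2)

/-- Orthogonal projection of ℝ⁸ onto `(span{e₀,e₁,e₂})^⊥`. -/
def proj012 (x : Oct) : Oct :=
  x - x 0 • octe 0 - x 1 • octe 1 - x 2 • octe 2

/-!
`X` is linear in its first slot, so the derivative at `s = 0` along `γ_j^ℓ` is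
`X(e_j, e_{ℓ+1}, e_{ℓ+2})`. For `j ≥ 4` this vector is already normal to `e₀∧e₁∧e₂`,
while `X(e₃, e_{ℓ+1}, e_{ℓ+2}) = -e_ℓ` lies in the plane, so its normal projection is
`0 = X(e₃, e_{ℓ+1}, e_{ℓ+2}) + e_ℓ`. Both facts are finite checks on the structure constants.
-/

lemma octe_apply (i m : Fin 8) : octe i m = if m = i then 1 else 0 := by
  simp [octe]

lemma inner_octe_octe (i i' : Fin 8) : ⟪octe i, octe i'⟫ = if i = i' then 1 else 0 := by
  simp [octe, EuclideanSpace.inner_single_left]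

lemma octMul_add_left (x x' y : Oct) : octMul (x + x') y = octMul x y + octMul x' y := by
  ext k
  simp only [octMul, PiLp.toLp_apply, PiLp.add_apply, add_mul, Finset.sum_add_distrib]

lemma octMul_smul_left (c : ℝ) (x y : Oct) : octMul (c • x) y = c • octMul x y := by
  ext k
  simp only [octMul, PiLp.toLp_apply, PiLp.smul_apply, smul_eq_mul, Finset.mul_sum, mul_assoc]

lemma octMul_octe_left_apply (i : Fin 8) (y : Oct) (k : Fin 8) :
    octMul (octe i) y k = ∑ n, y n * structC i n k := by
  simp [octMul, octe_apply]

lemma octMul_octe_octe_apply (i i' k : Fin 8) :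
    octMul (octe i) (octe i') k = structC i i' k := by
  simp [octMul_octe_left_apply, octe_apply]

lemma octConj_octe (i : Fin 8) :
    octConj (octe i) = (if i = 0 then 1 else -1 : ℝ) • octe i := by
  ext m
  simp only [octConj, octe_apply, PiLp.toLp_apply, PiLp.smul_apply, smul_eq_mul]
  split_ifs <;> grind

-- Integer copies of the structure constants, so that identities between them can be
-- checked by `decide`.
def epsInt (i j k : Fin 8) : ℤ :=
  if plusTriples.any (fun t => decide ((i,j,k) = t ∨ (i,j,k) = (t.2.1, t.2.2, t.1) ∨
      (i,j,k) = (t.2.2, t.1, t.2.1))) then 1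
  else if plusTriples.any (fun t => decide ((i,j,k) = (t.1, t.2.2, t.2.1) ∨
      (i,j,k) = (t.2.2, t.2.1, t.1) ∨ (i,j,k) = (t.2.1, t.1, t.2.2))) then -1
  else 0

def structCInt (i j k : Fin 8) : ℤ :=
  if i = 0 then (if j = k then 1 else 0)
  else if j = 0 then (if i = k then 1 else 0)
  else (if i = j ∧ k = 0 then -1 else 0) + epsInt i j k

lemma eps_eq_epsInt (i j k : Fin 8) : eps i j k = epsInt i j k := by
  unfold eps epsInt
  split_ifs <;> simp

lemma structC_eq_structCInt (i j k : Fin 8) : structC i j k = structCInt i j k := by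
  unfold structC structCInt
  split_ifs <;> simp [eps_eq_epsInt]

def X3Int (a b c m : Fin 8) : ℤ :=
  -(if b = 0 then 1 else -1) * ∑ n, structCInt b c n * structCInt a n m
    + (if a = b ∧ m = c then 1 else 0) + (if b = c ∧ m = a then 1 else 0)
    - (if c = a ∧ m = b then 1 else 0)

lemma X3_octe_apply (a b c m : Fin 8) :
    X3 (octe a) (octe b) (octe c) m = X3Int a b c m := by
  have hbc : ∀ n, octMul (octConj (octe b)) (octe c) n
      = (if b = 0 then 1 else -1) * structC b c n := fun n => by
    rw [octConj_octe, octMul_smul_left, PiLp.smul_apply, octMul_octe_octe_apply, smul_eq_mul]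
  simp only [X3, X3Int, octMul_octe_left_apply, hbc, inner_octe_octe, octe_apply,
    structC_eq_structCInt, PiLp.sub_apply, PiLp.add_apply, PiLp.neg_apply, PiLp.smul_apply,
    smul_eq_mul, Finset.mul_sum, ite_zero_mul_ite_zero, mul_one, neg_mul, mul_assoc]
  push_cast
  rw [Finset.sum_neg_distrib]

lemma X3Int_three (l : Fin 3) (m : Fin 8) :
    X3Int 3 (l1 l) (l2 l) m = -(if m = l0 l then 1 else 0) := by
  revert l m
  decide

lemma X3Int_of_four_le (l : Fin 3) (j : Fin 8) (hj : 4 ≤ (j : ℕ)) (m : Fin 8)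
    (hm : (m : ℕ) < 3) : X3Int j (l1 l) (l2 l) m = 0 := by
  revert l j m
  decide

lemma X3_octe_three (l : Fin 3) : X3 (octe 3) (octe (l1 l)) (octe (l2 l)) = -octe (l0 l) := by
  ext m
  rw [X3_octe_apply, X3Int_three, PiLp.neg_apply, octe_apply]
  push_cast
  rfl

lemma X3_add_left (a b v w : Oct) : X3 (a + b) v w = X3 a v w + X3 b v w := by
  simp only [X3, octMul_add_left, inner_add_left, inner_add_right, add_smul, smul_add]
  abel

lemma X3_smul_left (c : ℝ) (a v w : Oct) : X3 (c • a) v w = c • X3 a v w := by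
  simp only [X3, octMul_smul_left, real_inner_smul_left, real_inner_smul_right, mul_smul,
    smul_add, smul_sub, smul_neg, smul_comm c]

lemma hasDerivAt_cos_smul_add_sin_smul {E : Type*} [NormedAddCommGroup E] [NormedSpace ℝ E]
    (P Q : E) : HasDerivAt (fun s : ℝ => Real.cos s • P + Real.sin s • Q) Q 0 := by
  have h := ((Real.hasDerivAt_cos 0).smul_const P).fun_add ((Real.hasDerivAt_sin 0).smul_const Q)
  rwa [Real.sin_zero, neg_zero, zero_smul, Real.cos_zero, one_smul, zero_add] at h

lemma deriv_X3_cos_smul_add_sin_smul (A B v w : Oct) :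
    deriv (fun s : ℝ => X3 (Real.cos s • A + Real.sin s • B) v w) 0 = X3 B v w := by
  simp only [X3_add_left, X3_smul_left]
  exact (hasDerivAt_cos_smul_add_sin_smul _ _).deriv

lemma proj012_apply (x : Oct) (m : Fin 8) :
    proj012 x m = if (m : ℕ) < 3 then 0 else x m := by
  fin_cases m <;> simp [proj012, octe_apply]

lemma proj012_eq_self {x : Oct} (hx : ∀ m : Fin 8, (m : ℕ) < 3 → x m = 0) :
    proj012 x = x := by
  ext m
  rw [proj012_apply]
  split_ifs with hm
  exacts [(hx m hm).symm, rfl]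

lemma proj012_eq_zero {x : Oct} (hx : ∀ m : Fin 8, 3 ≤ (m : ℕ) → x m = 0) :
    proj012 x = 0 := by
  ext m
  rw [proj012_apply]
  split_ifs with hm
  exacts [rfl, hx m (not_lt.mp hm)]

lemma proj012_X3_octe (l : Fin 3) (j : Fin 8) (hj : 3 ≤ (j : ℕ)) :
    proj012 (X3 (octe j) (octe (l1 l)) (octe (l2 l)))
      = X3 (octe j) (octe (l1 l)) (octe (l2 l)) + (if j = 3 then octe (l0 l) else 0) := by
  rcases eq_or_ne j 3 with rfl | hne
  · rw [if_pos rfl, X3_octe_three, neg_add_cancel]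
    refine proj012_eq_zero fun m hm => ?_
    have hml : m ≠ l0 l := fun h => by simp [h, l0] at hm; omega
    simp [octe_apply, hml]
  · have hj4 : 4 ≤ (j : ℕ) := by
      have hj3 : (j : ℕ) ≠ 3 := fun h => hne (Fin.ext h)
      omega
    rw [if_neg hne, add_zero]
    refine proj012_eq_self fun m hm => ?_
    rw [X3_octe_apply, X3Int_of_four_le l j hj4 m hm, Int.cast_zero]

/-- The covariant derivative of `σ₃` at `t = 0` along the geodesic
`γ_j^ℓ(s) = e₀∧…∧(cos s e_ℓ + sin s e_j)∧…∧e₂` of `G(3,8)` (i.e. the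
projection onto the normal space at the base point of the usual derivative
of `s ↦ X(cos s e_ℓ + sin s e_j, e_{ℓ+1}, e_{ℓ+2})`, indices mod 3) equals
`X(e_j, e_{ℓ+1}, e_{ℓ+2}) + δ_{j3} e_ℓ`; in particular it vanishes
for `j = 3`. -/
theorem stmt14 (l : Fin 3) (j : Fin 8) (hj : 3 ≤ (j : ℕ)) :
    proj012 (deriv (fun s : ℝ =>
        X3 (Real.cos s • octe (l0 l) + Real.sin s • octe j)
          (octe (l1 l)) (octe (l2 l))) 0)
      = X3 (octe j) (octe (l1 l)) (octe (l2 l))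
          + (if j = 3 then octe (l0 l) else 0) ∧
    (j = 3 →
      proj012 (deriv (fun s : ℝ =>
        X3 (Real.cos s • octe (l0 l) + Real.sin s • octe j)
          (octe (l1 l)) (octe (l2 l))) 0) = 0) := by
  have hproj := proj012_X3_octe l j hj
  rw [deriv_X3_cos_smul_add_sin_smul]
  refine ⟨hproj, ?_⟩
  rintro rfl
  rw [hproj, if_pos rfl, X3_octe_three, neg_add_cancel]
end
end
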